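/- arXiv:1701.04083 — 3 statements merged into one kernel-verified Lean document; each statement's English description precedes it below -/
import Mathlib

section
/- Let k : (0,1] → ℝ be continuous with k > 0 on (0,1], k extending continuously to [0,1] with k(0) = 0, k ∈ C¹((0,1]), and suppose there exists γ ∈ [0,1) with x·k'(x) ≤ γ·k(x) for all x ∈ (0,1]. Then the function x ↦ x²/k(x) is non-decreasing on (0,1], and the improper integral ∫_0^1 r/k(r) dr is finite. -/
open MeasureTheory Set

/- The condition `x k'(x) ≤ p k(x)` says exactly that `(k / xᵖ)' ≤ 0`, so `k(x)/xᵖ` decreases.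
With `p = 2` this is the monotonicity of `x²/k(x)`; with `p = γ` it gives `k(x) ≥ k(1) x^γ` on
`(0,1]`, hence `r/k(r) ≤ r^(1-γ)/k(1)`, which is integrable near `0` because `1 - γ > -1`. -/

theorem antitoneOn_div_rpow_of_mul_deriv_le {k k' : ℝ → ℝ} {p : ℝ} {s : Set ℝ}
    (hs : Convex ℝ s) (hs0 : s ⊆ Ioi 0)
    (hderiv : ∀ x ∈ s, HasDerivAt k (k' x) x)
    (hcond : ∀ x ∈ s, x * k' x ≤ p * k x) :
    AntitoneOn (fun x => k x / x ^ p) s := by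
  have hquot : ∀ x ∈ s, HasDerivAt (fun x => k x / x ^ p)
      ((k' x * x ^ p - k x * (p * x ^ (p - 1))) / (x ^ p) ^ 2) x := fun x hx =>
    (hderiv x hx).div (Real.hasDerivAt_rpow_const (Or.inl (hs0 hx).ne'))
      (Real.rpow_pos_of_pos (hs0 hx) p).ne'
  apply antitoneOn_of_deriv_nonpos hs
  · exact fun x hx => (hquot x hx).continuousAt.continuousWithinAt
  · exact fun x hx =>
      (hquot x (interior_subset hx)).differentiableAt.differentiableWithinAt
  · intro x hx
    have hxs := interior_subset hx
    have hx0 : 0 < x := hs0 hxs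
    have hxp : x ^ p = x * x ^ (p - 1) := by
      rw [Real.rpow_sub_one hx0.ne']
      field_simp
    rw [(hquot x hxs).deriv]
    refine div_nonpos_of_nonpos_of_nonneg ?_ (sq_nonneg _)
    calc k' x * x ^ p - k x * (p * x ^ (p - 1))
        = x ^ (p - 1) * (x * k' x - p * k x) := by rw [hxp]; ring
      _ ≤ 0 := mul_nonpos_of_nonneg_of_nonpos (Real.rpow_nonneg hx0.le _)
          (sub_nonpos.mpr (hcond x hxs))

theorem integrableOn_div_of_mul_rpow_le {k : ℝ → ℝ} {c γ : ℝ} (hc : 0 < c) (hγ : γ < 2)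
    (hk : ContinuousOn k (Ioc 0 1)) (hlow : ∀ r ∈ Ioc (0 : ℝ) 1, c * r ^ γ ≤ k r) :
    IntegrableOn (fun r => r / k r) (Ioc 0 1) := by
  have hkpos : ∀ r ∈ Ioc (0 : ℝ) 1, 0 < k r := fun r hr =>
    (mul_pos hc (Real.rpow_pos_of_pos hr.1 γ)).trans_le (hlow r hr)
  have hdom : IntegrableOn (fun r : ℝ => r ^ (1 - γ) / c) (Ioc 0 1) :=
    ((intervalIntegrable_iff_integrableOn_Ioc_of_le zero_le_one).mp
      (intervalIntegral.intervalIntegrable_rpow' (by linarith))).div_const c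
  refine hdom.mono' ((continuousOn_id.div hk fun r hr => (hkpos r hr).ne').aestronglyMeasurable
    measurableSet_Ioc) ((ae_restrict_iff' measurableSet_Ioc).mpr (.of_forall fun r hr => ?_))
  rw [Real.norm_of_nonneg (div_nonneg hr.1.le (hkpos r hr).le)]
  calc r / k r ≤ r / (c * r ^ γ) :=
        div_le_div_of_nonneg_left hr.1.le (by have := hr.1; positivity) (hlow r hr)
    _ = r ^ (1 - γ) / c := by
        rw [Real.rpow_sub hr.1, Real.rpow_one, div_div, mul_comm]

theorem stmt_4_general (k k' : ℝ → ℝ) (γ : ℝ)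
    (hkpos : ∀ x ∈ Set.Ioc (0:ℝ) 1, 0 < k x)
    (hderiv : ∀ x ∈ Set.Ioc (0:ℝ) 1, HasDerivAt k (k' x) x)
    (hγ1 : γ < 1)
    (hcond : ∀ x ∈ Set.Ioc (0:ℝ) 1, x * k' x ≤ γ * k x) :
    (∀ x ∈ Set.Ioc (0:ℝ) 1, ∀ y ∈ Set.Ioc (0:ℝ) 1, x ≤ y →
        x ^ 2 / k x ≤ y ^ 2 / k y) ∧
    IntegrableOn (fun r => r / k r) (Set.Ioc 0 1) := by
  have hanti {p : ℝ} (hp : ∀ x ∈ Ioc (0:ℝ) 1, x * k' x ≤ p * k x) :=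
    antitoneOn_div_rpow_of_mul_deriv_le (convex_Ioc 0 1) Ioc_subset_Ioi_self hderiv hp
  have hone : (1 : ℝ) ∈ Ioc 0 1 := ⟨one_pos, le_rfl⟩
  refine ⟨fun x hx y hy hxy => ?_, ?_⟩
  · have hle := hanti (p := 2) (fun x hx => (hcond x hx).trans (by nlinarith [hkpos x hx]))
      hx hy hxy
    simp only [Real.rpow_two] at hle
    rw [← inv_div (k x), ← inv_div (k y)]
    exact inv_anti₀ (div_pos (hkpos y hy) (pow_pos hy.1 2)) hle
  · refine integrableOn_div_of_mul_rpow_le (hkpos 1 hone) (by linarith)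
      (fun x hx => (hderiv x hx).continuousAt.continuousWithinAt) fun x hx => ?_
    have hle : k 1 / 1 ^ γ ≤ k x / x ^ γ := hanti hcond hx hone hx.2
    rwa [Real.one_rpow, div_one, le_div_iff₀ (Real.rpow_pos_of_pos hx.1 γ)] at hle

/-- Under the degeneracy hypotheses (2.3), `x ↦ x²/k(x)` is non-decreasing on `(0,1]`
and `∫₀¹ r/k(r) dr` is finite. -/
theorem stmt_4 (k k' : ℝ → ℝ) (γ : ℝ)
    (hkcont : ContinuousOn k (Set.Icc 0 1))
    (hk0 : k 0 = 0)
    (hkpos : ∀ x ∈ Set.Ioc (0:ℝ) 1, 0 < k x)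
    (hderiv : ∀ x ∈ Set.Ioc (0:ℝ) 1, HasDerivAt k (k' x) x)
    (hγ0 : 0 ≤ γ) (hγ1 : γ < 1)
    (hcond : ∀ x ∈ Set.Ioc (0:ℝ) 1, x * k' x ≤ γ * k x) :
    (∀ x ∈ Set.Ioc (0:ℝ) 1, ∀ y ∈ Set.Ioc (0:ℝ) 1, x ≤ y →
        x ^ 2 / k x ≤ y ^ 2 / k y) ∧
    IntegrableOn (fun r => r / k r) (Set.Ioc 0 1) :=
  stmt_4_general k k' γ hkpos hderiv hγ1 hcond
end

section
/- Let ψ₂(x) = λ₂(∫_0^x r/k₂(r) dr − d₂) and Ψ(x) = e^{κσ(x)} − e^{2κ‖σ‖_∞}, with σ as in (2.14), 0 ≤ σ ≤ ‖σ‖_∞, and suppose λ₂ ∈ [ k₂(1)(2−γ)(e^{2κ‖σ‖_∞} − 1)/(d₂k₂(1)(2−γ) − 1), 4(e^{2κ‖σ‖_∞} − e^{κ‖σ‖_∞})/(3d₂) ), where ∫_0^1 r/k₂(r) dr ≤ 1/(k₂(1)(2−γ)) and d₂ ≥ 5/(k₂(1)(2−γ)). Then (4/3)Ψ(x) < ψ₂(x)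 ≤ Ψ(x) for all x ∈ [0,1]. -/
/-!
Once the exponentials are bounded, `1 ≤ e^{κσ(x)} ≤ e^{κ‖σ‖_∞}`, both inequalities are linear
in `λ₂`. Writing `p = k₂(1)(2−γ)`, the lower bound on `λ₂` says `λ₂ (d₂ − 1/p) ≥ e^{2κ‖σ‖_∞} − 1`,
which together with `∫_0^x r/k₂ ≤ 1/p` gives `ψ₂ ≤ 1 − e^{2κ‖σ‖_∞} ≤ Ψ`. The upper bound on `λ₂`
and `∫_0^x r/k₂ ≥ 0` give `ψ₂ ≥ −λ₂d₂ > (4/3)(e^{κ‖σ‖_∞} − e^{2κ‖σ‖_∞}) ≥ (4/3)Ψ`.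
-/

open MeasureTheory Real

section Sandwich

variable {lam I d E A B p : ℝ}

lemma four_thirds_mul_sub_lt_mul_sub (hlam : 0 ≤ lam) (hI : 0 ≤ I) (hd : 0 < d)
    (hlam_lt : lam < 4 * (A - B) / (3 * d)) (hEB : E ≤ B) :
    4 / 3 * (E - A) < lam * (I - d) := by
  have hlamd : lam * (3 * d) < 4 * (A - B) := (lt_div_iff₀ (by positivity)).1 hlam_lt
  nlinarith [mul_nonneg hlam hI]

lemma mul_sub_le_sub_of_div_le (hp : 0 < p) (hdp : 1 < d * p)
    (hlam_ge : p * (A - 1) / (d * p - 1) ≤ lam) (hlam : 0 ≤ lam) (hI : I ≤ 1 / p) (hE : 1 ≤ E) :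
    lam * (I - d) ≤ E - A := by
  have hlam' : p * (A - 1) ≤ lam * (d * p - 1) := (div_le_iff₀ (sub_pos.2 hdp)).1 hlam_ge
  have hIp : I * p ≤ 1 := (le_div_iff₀ hp).1 hI
  refine le_of_mul_le_mul_left ?_ hp
  nlinarith [mul_le_mul_of_nonneg_left hIp hlam, mul_le_mul_of_nonneg_left hE hp.le]

end Sandwich

theorem stmt_9_general (k2fun σ : ℝ → ℝ) (k2 γ d2 lam2 κ M : ℝ)
    (hk2 : 0 < k2) (hγ1 : γ < 1)
    (hM : 0 < M) (hκ : κ ≥ 4 * Real.log 2 / M)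
    (hσ : ∀ x ∈ Set.Icc (0:ℝ) 1, 0 ≤ σ x ∧ σ x ≤ M)
    (hd2 : d2 ≥ 5 / (k2 * (2 - γ)))
    (hintbound : ∀ x ∈ Set.Icc (0:ℝ) 1,
        0 ≤ (∫ r in (0:ℝ)..x, r / k2fun r) ∧
        (∫ r in (0:ℝ)..x, r / k2fun r) ≤ 1 / (k2 * (2 - γ)))
    (hlam2lb : lam2 ≥ k2 * (2 - γ) * (Real.exp (2 * κ * M) - 1) / (d2 * k2 * (2 - γ) - 1))
    (hlam2ub : lam2 < 4 * (Real.exp (2 * κ * M) - Real.exp (κ * M)) / (3 * d2)) :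
    ∀ x ∈ Set.Icc (0:ℝ) 1,
      (4 / 3) * (Real.exp (κ * σ x) - Real.exp (2 * κ * M))
          < lam2 * ((∫ r in (0:ℝ)..x, r / k2fun r) - d2) ∧
      lam2 * ((∫ r in (0:ℝ)..x, r / k2fun r) - d2)
          ≤ Real.exp (κ * σ x) - Real.exp (2 * κ * M) := by
  intro x hx
  obtain ⟨hσ0, hσM⟩ := hσ x hx
  obtain ⟨hI0, hI1⟩ := hintbound x hx
  have hp : 0 < k2 * (2 - γ) := mul_pos hk2 (by linarith)
  have hdp : 1 < d2 * (k2 * (2 - γ)) := by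
    have := (div_le_iff₀ hp).1 hd2
    linarith
  have hκ0 : 0 ≤ κ := le_trans (by positivity) hκ
  have hE1 : 1 ≤ exp (κ * σ x) := one_le_exp (mul_nonneg hκ0 hσ0)
  have hEB : exp (κ * σ x) ≤ exp (κ * M) := exp_le_exp.2 (mul_le_mul_of_nonneg_left hσM hκ0)
  have hA1 : 1 ≤ exp (2 * κ * M) := one_le_exp (by positivity)
  rw [mul_assoc d2] at hlam2lb
  have hlam0 : 0 ≤ lam2 :=
    le_trans (div_nonneg (mul_nonneg hp.le (sub_nonneg.2 hA1)) (sub_nonneg.2 hdp.le)) hlam2lb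
  exact ⟨four_thirds_mul_sub_lt_mul_sub hlam0 hI0
    (pos_of_mul_pos_left (one_pos.trans hdp) hp.le) hlam2ub hEB,
    mul_sub_le_sub_of_div_le hp hdp hlam2lb hlam0 hI1 hE1⟩

/-- The sandwich inequality `(4/3)Ψ < ψ₂ ≤ Ψ` on `[0,1]` (second part of (2.23)). -/
theorem stmt_9 (k2fun σ : ℝ → ℝ) (k2 γ d2 lam2 κ M : ℝ)
    (hk2 : 0 < k2) (hγ0 : 0 ≤ γ) (hγ1 : γ < 1)
    (hM : 0 < M) (hκ : κ ≥ 4 * Real.log 2 / M)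
    (hσ : ∀ x ∈ Set.Icc (0:ℝ) 1, 0 ≤ σ x ∧ σ x ≤ M)
    (hd2 : d2 ≥ 5 / (k2 * (2 - γ)))
    (hk2pos : ∀ x ∈ Set.Ioc (0:ℝ) 1, 0 < k2fun x)
    (hint : IntervalIntegrable (fun r => r / k2fun r) volume 0 1)
    (hintbound : ∀ x ∈ Set.Icc (0:ℝ) 1,
        0 ≤ (∫ r in (0:ℝ)..x, r / k2fun r) ∧
        (∫ r in (0:ℝ)..x, r / k2fun r) ≤ 1 / (k2 * (2 - γ)))
    (hlam2lb : lam2 ≥ k2 * (2 - γ) * (Real.exp (2 * κ * M) - 1) / (d2 * k2 * (2 - γ) - 1))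
    (hlam2ub : lam2 < 4 * (Real.exp (2 * κ * M) - Real.exp (κ * M)) / (3 * d2)) :
    ∀ x ∈ Set.Icc (0:ℝ) 1,
      (4 / 3) * (Real.exp (κ * σ x) - Real.exp (2 * κ * M))
          < lam2 * ((∫ r in (0:ℝ)..x, r / k2fun r) - d2) ∧
      lam2 * ((∫ r in (0:ℝ)..x, r / k2fun r) - d2)
          ≤ Real.exp (κ * σ x) - Real.exp (2 * κ * M) :=
  stmt_9_general k2fun σ k2 γ d2 lam2 κ M hk2 hγ1 hM hκ hσ hd2 hintbound hlam2lb hlam2ub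
end

section
/- (Hardy–Poincaré type inequality for degenerate weights.) Let k ∈ C([0,1]) be positive on (0,1] with k(0) = 0, and assume x·k'(x) ≤ γ·k(x) on (0,1] for some γ ∈ [0,1). Then there exists a constant C_HP > 0 such that for every locally absolutely continuous function w on [0,1] with w(0) = w(1) = 0 and ∫_0^1 k(x) w'(x)² dx < ∞, one has ∫_0^1 (k(x)/x²) w(x)² dx ≤ C_HP ∫_0^1 k(x) w'(x)² dx. -/
/-!
Write `k(x) = x^γ m(x)`; the hypothesis `x k' ≤ γ k` makes `m` non-increasing.
Fix `0 < σ < 1 - γ`. By the fundamental theorem of calculus and Cauchy–Schwarz with weight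
`k(t) t^σ`,
  `w(x)² ≤ (∫₀ˣ k t^σ w'²) (∫₀ˣ t^{-σ} / k)`,
and since `1/k(t) ≤ t^{-γ}/m(x)` for `t ≤ x` while `t^{-σ-γ}` is integrable at `0`, the second
factor is at most `x^{1-σ} / ((1-σ-γ) k(x))`. Hence
  `(k(x)/x²) w(x)² ≤ x^{-1-σ}/(1-σ-γ) · ∫₀ˣ k t^σ w'²`,
and integrating in `x`, exchanging the order of integration and using
`∫ₜ^∞ x^{-1-σ} dx = t^{-σ}/σ` gives the inequality with `C = 1/(σ(1-σ-γ))`.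
-/

open MeasureTheory Set
open scoped ENNReal

theorem antitoneOn_mul_rpow_neg_of_mul_deriv_le {k k' : ℝ → ℝ} {γ : ℝ} {s : Set ℝ}
    (hs : Convex ℝ s) (hs0 : s ⊆ Ioi 0) (hk : ∀ x ∈ s, HasDerivAt k (k' x) x)
    (hk' : ∀ x ∈ s, x * k' x ≤ γ * k x) :
    AntitoneOn (fun x => k x * x ^ (-γ)) s := by
  have hderiv : ∀ x ∈ s, HasDerivAt (fun x => k x * x ^ (-γ))
      (x ^ (-γ - 1) * (x * k' x - γ * k x)) x := fun x hx => by
    have hx0 : 0 < x := hs0 hx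
    refine ((hk x hx).mul (Real.hasDerivAt_rpow_const (p := -γ) (Or.inl hx0.ne'))).congr_deriv ?_
    rw [Real.rpow_sub hx0, Real.rpow_one]
    field_simp
    ring
  refine antitoneOn_of_hasDerivWithinAt_nonpos hs
    (fun x hx => (hderiv x hx).continuousAt.continuousWithinAt)
    (fun x hx => (hderiv x (interior_subset hx)).hasDerivWithinAt) fun x hx => ?_
  have hx : x ∈ s := interior_subset hx
  exact mul_nonpos_of_nonneg_of_nonpos (Real.rpow_nonneg (hs0 hx).le _)
    (sub_nonpos.2 (hk' x hx))

theorem aemeasurable_restrict_of_hasDerivAt {w w' : ℝ → ℝ} {s : Set ℝ} (hs : MeasurableSet s)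
    (hw : ∀ t ∈ s, HasDerivAt w (w' t) t) : AEMeasurable w' (volume.restrict s) :=
  (measurable_deriv w).aemeasurable.congr
    (ae_restrict_of_forall_mem hs fun t ht => (hw t ht).deriv)

theorem sq_lintegral_enorm_le_mul_lintegral_inv {α : Type*} [MeasurableSpace α]
    {μ : Measure α} {f ρ : α → ℝ} (hf : AEMeasurable f μ) (hρ : AEMeasurable ρ μ)
    (hρpos : ∀ᵐ a ∂μ, 0 < ρ a) :
    (∫⁻ a, ‖f a‖ₑ ∂μ) ^ 2 ≤
      (∫⁻ a, ENNReal.ofReal (ρ a * f a ^ 2) ∂μ) * ∫⁻ a, ENNReal.ofReal (ρ a)⁻¹ ∂μ := by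
  have hsplit : ∀ᵐ a ∂μ, ‖f a‖ₑ = ENNReal.ofReal (ρ a * f a ^ 2) ^ (1 / 2 : ℝ) *
      ENNReal.ofReal (ρ a)⁻¹ ^ (1 / 2 : ℝ) := by
    filter_upwards [hρpos] with a ha
    rw [← ENNReal.mul_rpow_of_nonneg _ _ (by norm_num), ← ENNReal.ofReal_mul (by positivity),
      ENNReal.ofReal_rpow_of_nonneg (by positivity) (by norm_num), ← Real.sqrt_eq_rpow,
      mul_right_comm, mul_inv_cancel₀ ha.ne', one_mul, Real.sqrt_sq_eq_abs,
      Real.enorm_eq_ofReal_abs]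
  calc (∫⁻ a, ‖f a‖ₑ ∂μ) ^ 2
      ≤ ((∫⁻ a, ENNReal.ofReal (ρ a * f a ^ 2) ∂μ) ^ (1 / 2 : ℝ) *
          (∫⁻ a, ENNReal.ofReal (ρ a)⁻¹ ∂μ) ^ (1 / 2 : ℝ)) ^ 2 := by
        rw [lintegral_congr_ae hsplit]
        gcongr
        exact ENNReal.lintegral_mul_norm_pow_le
          (hρ.mul (hf.pow_const 2)).ennreal_ofReal hρ.inv.ennreal_ofReal
          (by norm_num) (by norm_num) (by norm_num)
    _ = _ := by
        rw [mul_pow, ← ENNReal.rpow_natCast, ← ENNReal.rpow_mul, ← ENNReal.rpow_natCast,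
          ← ENNReal.rpow_mul]
        norm_num

theorem ofReal_sq_le_of_hasDerivAt {w w' ρ : ℝ → ℝ} {x : ℝ} (hx : 0 < x)
    (hwc : ContinuousOn w (Icc 0 x)) (hw : ∀ t ∈ Ioo 0 x, HasDerivAt w (w' t) t) (hw0 : w 0 = 0)
    (hρ : AEMeasurable ρ (volume.restrict (Ioo 0 x))) (hρpos : ∀ t ∈ Ioo 0 x, 0 < ρ t)
    (hfin : (∫⁻ t in Ioo 0 x, ENNReal.ofReal (ρ t * w' t ^ 2)) *
      ∫⁻ t in Ioo 0 x, ENNReal.ofReal (ρ t)⁻¹ ≠ ∞) :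
    ENNReal.ofReal (w x ^ 2) ≤ (∫⁻ t in Ioo 0 x, ENNReal.ofReal (ρ t * w' t ^ 2)) *
      ∫⁻ t in Ioo 0 x, ENNReal.ofReal (ρ t)⁻¹ := by
  have hw'm := aemeasurable_restrict_of_hasDerivAt measurableSet_Ioo hw
  have hCS := sq_lintegral_enorm_le_mul_lintegral_inv hw'm hρ
    (ae_restrict_of_forall_mem measurableSet_Ioo hρpos)
  -- The same Cauchy–Schwarz bound makes `w'` integrable up to `0`, as the FTC requires.
  have hint : IntegrableOn w' (Ioo 0 x) :=
    ⟨hw'm.aestronglyMeasurable, lt_top_iff_ne_top.2 fun h => hfin <| top_le_iff.1 <| by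
      simpa [h] using hCS⟩
  have hftc : w x = ∫ t in Ioo 0 x, w' t := by
    rw [← integral_Ioc_eq_integral_Ioo, ← intervalIntegral.integral_of_le hx.le,
      intervalIntegral.integral_eq_sub_of_hasDerivAt_of_le hx.le hwc hw
        ((intervalIntegrable_iff_integrableOn_Ioo_of_le hx.le).2 hint), hw0, sub_zero]
  calc ENNReal.ofReal (w x ^ 2) = ‖w x‖ₑ ^ 2 := by
        rw [Real.enorm_eq_ofReal_abs, ← ENNReal.ofReal_pow (abs_nonneg _), sq_abs]
    _ ≤ (∫⁻ t in Ioo 0 x, ‖w' t‖ₑ) ^ 2 := by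
        rw [hftc]
        gcongr
        exact enorm_integral_le_lintegral_enorm _
    _ ≤ _ := hCS

theorem setLIntegral_Ioo_ofReal_rpow {r x : ℝ} (hr : -1 < r) (hx : 0 < x) :
    ∫⁻ t in Ioo 0 x, ENNReal.ofReal (t ^ r) = ENNReal.ofReal (x ^ (r + 1) / (r + 1)) := by
  have hint : IntegrableOn (fun t : ℝ => t ^ r) (Ioo 0 x) :=
    (intervalIntegrable_iff_integrableOn_Ioo_of_le hx.le).1
      (intervalIntegral.intervalIntegrable_rpow' hr)
  rw [← ofReal_integral_eq_lintegral_ofReal hint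
      (ae_restrict_of_forall_mem measurableSet_Ioo fun t ht => Real.rpow_nonneg ht.1.le _),
    ← integral_Ioc_eq_integral_Ioo, ← intervalIntegral.integral_of_le hx.le,
    integral_rpow (Or.inl hr), Real.zero_rpow (by linarith), sub_zero]

theorem setLIntegral_Ioi_ofReal_rpow {r c : ℝ} (hr : r < -1) (hc : 0 < c) :
    ∫⁻ t in Ioi c, ENNReal.ofReal (t ^ r) = ENNReal.ofReal (-c ^ (r + 1) / (r + 1)) := by
  rw [← ofReal_integral_eq_lintegral_ofReal (integrableOn_Ioi_rpow_of_lt hr hc)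
      (ae_restrict_of_forall_mem measurableSet_Ioi fun t ht =>
        Real.rpow_nonneg (hc.trans ht).le _),
    integral_Ioi_rpow_of_lt hr hc]

theorem setLIntegral_Ioo_inv_mul_rpow_le_of_antitoneOn {k : ℝ → ℝ} {γ σ x : ℝ} (hx : 0 < x)
    (hσγ : σ + γ < 1) (hk : ∀ t ∈ Ioc 0 x, 0 < k t)
    (hanti : AntitoneOn (fun t => k t * t ^ (-γ)) (Ioc 0 x)) :
    ∫⁻ t in Ioo 0 x, ENNReal.ofReal (k t * t ^ σ)⁻¹ ≤
      ENNReal.ofReal (x ^ (1 - σ) / ((1 - σ - γ) * k x)) := by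
  have hkx : 0 < k x * x ^ (-γ) := mul_pos (hk x ⟨hx, le_rfl⟩) (Real.rpow_pos_of_pos hx _)
  have hpt : ∀ t ∈ Ioo 0 x, (k t * t ^ σ)⁻¹ ≤ (k x * x ^ (-γ))⁻¹ * t ^ (-σ - γ) := by
    intro t ht
    have hkt : k x * x ^ (-γ) ≤ k t * t ^ (-γ) := hanti ⟨ht.1, ht.2.le⟩ ⟨hx, le_rfl⟩ ht.2.le
    have hsplit : k t * t ^ σ = k t * t ^ (-γ) * t ^ (σ + γ) := by
      rw [mul_assoc, ← Real.rpow_add ht.1]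
      ring_nf
    rw [hsplit, show -σ - γ = -(σ + γ) by ring, Real.rpow_neg ht.1.le (σ + γ), mul_inv]
    exact mul_le_mul_of_nonneg_right (inv_anti₀ hkx hkt)
      (inv_nonneg.2 (Real.rpow_nonneg ht.1.le _))
  calc ∫⁻ t in Ioo 0 x, ENNReal.ofReal (k t * t ^ σ)⁻¹
      ≤ ∫⁻ t in Ioo 0 x,
          ENNReal.ofReal (k x * x ^ (-γ))⁻¹ * ENNReal.ofReal (t ^ (-σ - γ)) :=
        setLIntegral_mono' measurableSet_Ioo fun t ht => by
          rw [← ENNReal.ofReal_mul (inv_pos.2 hkx).le]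
          exact ENNReal.ofReal_le_ofReal (hpt t ht)
    _ = _ := by
        rw [lintegral_const_mul' _ _ ENNReal.ofReal_ne_top,
          setLIntegral_Ioo_ofReal_rpow (by linarith) hx,
          ← ENNReal.ofReal_mul (inv_pos.2 hkx).le]
        congr 1
        rw [show -σ - γ + 1 = (1 - σ) + -γ by ring, Real.rpow_add hx]
        field_simp
        ring

theorem setLIntegral_rpow_mul_setLIntegral_Ioo_le {σ b : ℝ} (hσ : 0 < σ) {φ : ℝ → ℝ≥0∞}
    (hφ : AEMeasurable φ (volume.restrict (Ioo 0 b))) :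
    ∫⁻ x in Ioo 0 b, ENNReal.ofReal (x ^ (-1 - σ)) * ∫⁻ t in Ioo 0 x, φ t ≤
      ∫⁻ t in Ioo 0 b, ENNReal.ofReal (t ^ (-σ) / σ) * φ t := by
  obtain ⟨ψ, hψm, hφψ⟩ : ∃ ψ, Measurable ψ ∧ φ =ᵐ[volume.restrict (Ioo 0 b)] ψ :=
    ⟨hφ.mk φ, hφ.measurable_mk, hφ.ae_eq_mk⟩
  have hψ : ∀ x ∈ Ioo 0 b, ∫⁻ t in Ioo 0 x, φ t = ∫⁻ t in Ioo 0 b, (Iio x).indicator ψ t := by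
    intro x hx
    rw [lintegral_indicator measurableSet_Iio, Measure.restrict_restrict measurableSet_Iio,
      Iio_inter_Ioo, min_eq_left hx.2.le]
    exact lintegral_congr_ae
      (ae_restrict_of_ae_restrict_of_subset (Ioo_subset_Ioo_right hx.2.le) hφψ)
  have hinner : ∀ t ∈ Ioo 0 b,
      ∫⁻ x in Ioo 0 b, ENNReal.ofReal (x ^ (-1 - σ)) * (Iio x).indicator ψ t ≤
        ENNReal.ofReal (t ^ (-σ) / σ) * ψ t := by
    intro t ht
    calc ∫⁻ x in Ioo 0 b, ENNReal.ofReal (x ^ (-1 - σ)) * (Iio x).indicator ψ t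
        ≤ ∫⁻ x, (Ioi t).indicator (fun x => ENNReal.ofReal (x ^ (-1 - σ))) x * ψ t := by
          refine (setLIntegral_le_lintegral _ _).trans_eq (lintegral_congr fun x => ?_)
          by_cases h : t < x <;> simp [h]
      _ = ENNReal.ofReal (t ^ (-σ) / σ) * ψ t := by
          rw [lintegral_mul_const _ (Measurable.indicator (by fun_prop) measurableSet_Ioi),
            lintegral_indicator measurableSet_Ioi,
            setLIntegral_Ioi_ofReal_rpow (by linarith) ht.1, show -1 - σ + 1 = -σ by ring,
            neg_div_neg_eq]
  calc ∫⁻ x in Ioo 0 b, ENNReal.ofReal (x ^ (-1 - σ)) * ∫⁻ t in Ioo 0 x, φ t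
      = ∫⁻ x in Ioo 0 b, ∫⁻ t in Ioo 0 b,
          ENNReal.ofReal (x ^ (-1 - σ)) * (Iio x).indicator ψ t :=
        setLIntegral_congr_fun measurableSet_Ioo fun x hx => by
          rw [hψ x hx, lintegral_const_mul _ (hψm.indicator measurableSet_Iio)]
    _ = ∫⁻ t in Ioo 0 b, ∫⁻ x in Ioo 0 b,
          ENNReal.ofReal (x ^ (-1 - σ)) * (Iio x).indicator ψ t :=
        lintegral_lintegral_swap <| Measurable.aemeasurable <|
          (by fun_prop : Measurable fun p : ℝ × ℝ => ENNReal.ofReal (p.1 ^ (-1 - σ))).mul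
            ((hψm.comp measurable_snd).indicator (measurableSet_lt measurable_snd measurable_fst))
    _ ≤ ∫⁻ t in Ioo 0 b, ENNReal.ofReal (t ^ (-σ) / σ) * ψ t :=
        setLIntegral_mono' measurableSet_Ioo hinner
    _ = ∫⁻ t in Ioo 0 b, ENNReal.ofReal (t ^ (-σ) / σ) * φ t :=
        lintegral_congr_ae (hφψ.mono fun t ht => by simp only [ht])

theorem ofReal_div_sq_mul_sq_le_of_antitoneOn {k w w' : ℝ → ℝ} {γ σ x : ℝ} (hσ : 0 ≤ σ)
    (hσγ : σ + γ < 1) (hk : ∀ x ∈ Ioc 0 1, 0 < k x)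
    (hkm : AEMeasurable k (volume.restrict (Ioo 0 1)))
    (hanti : AntitoneOn (fun x => k x * x ^ (-γ)) (Ioc 0 1))
    (hwc : ContinuousOn w (Icc 0 1)) (hw : ∀ x ∈ Ioo 0 1, HasDerivAt w (w' x) x) (hw0 : w 0 = 0)
    (hfin : ∫⁻ x in Ioo 0 1, ENNReal.ofReal (k x * w' x ^ 2) ≠ ∞) (hx : x ∈ Ioo 0 1) :
    ENNReal.ofReal (k x / x ^ 2 * w x ^ 2) ≤
      ENNReal.ofReal (1 - σ - γ)⁻¹ * (ENNReal.ofReal (x ^ (-1 - σ)) *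
        ∫⁻ t in Ioo 0 x, ENNReal.ofReal (k t * t ^ σ * w' t ^ 2)) := by
  have hsub : Ioo 0 x ⊆ Ioo 0 1 := Ioo_subset_Ioo_right hx.2.le
  have hkx : 0 < k x := hk x ⟨hx.1, hx.2.le⟩
  have hB := setLIntegral_Ioo_inv_mul_rpow_le_of_antitoneOn hx.1 hσγ
    (fun t ht => hk t ⟨ht.1, ht.2.trans hx.2.le⟩) (hanti.mono (Ioc_subset_Ioc_right hx.2.le))
  have hA : ∫⁻ t in Ioo 0 x, ENNReal.ofReal (k t * t ^ σ * w' t ^ 2) ≤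
      ∫⁻ t in Ioo 0 1, ENNReal.ofReal (k t * w' t ^ 2) := by
    refine (setLIntegral_mono' measurableSet_Ioo fun t ht => ENNReal.ofReal_le_ofReal ?_).trans
      (lintegral_mono_set hsub)
    have hkt : 0 < k t := hk t ⟨ht.1, (ht.2.trans hx.2).le⟩
    have htσ : t ^ σ ≤ 1 := Real.rpow_le_one ht.1.le (ht.2.trans hx.2).le hσ
    gcongr
    exact mul_le_of_le_one_right hkt.le htσ
  have hsq := ofReal_sq_le_of_hasDerivAt (ρ := fun t => k t * t ^ σ) hx.1
    (hwc.mono (Icc_subset_Icc_right hx.2.le)) (fun t ht => hw t (hsub ht)) hw0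
    ((hkm.mono_measure (Measure.restrict_mono hsub le_rfl)).mul
      (by fun_prop : Measurable fun t : ℝ => t ^ σ).aemeasurable)
    (fun t ht => mul_pos (hk t ⟨ht.1, (ht.2.trans hx.2).le⟩) (Real.rpow_pos_of_pos ht.1 σ))
    (ENNReal.mul_ne_top (ne_top_of_le_ne_top hfin hA)
      (ne_top_of_le_ne_top ENNReal.ofReal_ne_top hB))
  have hweight : k x / x ^ 2 * (x ^ (1 - σ) / ((1 - σ - γ) * k x)) =
      (1 - σ - γ)⁻¹ * x ^ (-1 - σ) := by
    rw [show -1 - σ = (1 - σ) - 2 by ring, Real.rpow_sub hx.1 (1 - σ) 2, Real.rpow_two]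
    field_simp
  calc ENNReal.ofReal (k x / x ^ 2 * w x ^ 2)
      = ENNReal.ofReal (k x / x ^ 2) * ENNReal.ofReal (w x ^ 2) :=
        ENNReal.ofReal_mul (by positivity)
    _ ≤ ENNReal.ofReal (k x / x ^ 2) *
          ((∫⁻ t in Ioo 0 x, ENNReal.ofReal (k t * t ^ σ * w' t ^ 2)) *
            ENNReal.ofReal (x ^ (1 - σ) / ((1 - σ - γ) * k x))) :=
        mul_le_mul_right (hsq.trans (mul_le_mul_right hB _)) _
    _ = _ := by
        rw [mul_left_comm, ← ENNReal.ofReal_mul (by positivity), hweight,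
          ENNReal.ofReal_mul (inv_nonneg.2 (by linarith))]
        ring

theorem setLIntegral_hardy_of_antitoneOn {k w w' : ℝ → ℝ} {γ σ : ℝ} (hσ : 0 < σ)
    (hσγ : σ + γ < 1) (hk : ∀ x ∈ Ioc 0 1, 0 < k x)
    (hkm : AEMeasurable k (volume.restrict (Ioo 0 1)))
    (hanti : AntitoneOn (fun x => k x * x ^ (-γ)) (Ioc 0 1))
    (hwc : ContinuousOn w (Icc 0 1)) (hw : ∀ x ∈ Ioo 0 1, HasDerivAt w (w' x) x) (hw0 : w 0 = 0)
    (hfin : ∫⁻ x in Ioo 0 1, ENNReal.ofReal (k x * w' x ^ 2) ≠ ∞) :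
    ∫⁻ x in Ioo 0 1, ENNReal.ofReal (k x / x ^ 2 * w x ^ 2) ≤
      ENNReal.ofReal (σ * (1 - σ - γ))⁻¹ * ∫⁻ x in Ioo 0 1, ENNReal.ofReal (k x * w' x ^ 2) := by
  have hφm : AEMeasurable (fun t => ENNReal.ofReal (k t * t ^ σ * w' t ^ 2))
      (volume.restrict (Ioo 0 1)) :=
    ((hkm.mul (by fun_prop : Measurable fun t : ℝ => t ^ σ).aemeasurable).mul
      ((aemeasurable_restrict_of_hasDerivAt measurableSet_Ioo hw).pow_const 2)).ennreal_ofReal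
  calc ∫⁻ x in Ioo 0 1, ENNReal.ofReal (k x / x ^ 2 * w x ^ 2)
      ≤ ∫⁻ x in Ioo 0 1, ENNReal.ofReal (1 - σ - γ)⁻¹ * (ENNReal.ofReal (x ^ (-1 - σ)) *
          ∫⁻ t in Ioo 0 x, ENNReal.ofReal (k t * t ^ σ * w' t ^ 2)) :=
        setLIntegral_mono' measurableSet_Ioo fun x hx =>
          ofReal_div_sq_mul_sq_le_of_antitoneOn hσ.le hσγ hk hkm hanti hwc hw hw0 hfin hx
    _ ≤ ENNReal.ofReal (1 - σ - γ)⁻¹ * ∫⁻ t in Ioo 0 1,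
          ENNReal.ofReal (t ^ (-σ) / σ) * ENNReal.ofReal (k t * t ^ σ * w' t ^ 2) := by
        rw [lintegral_const_mul' _ _ ENNReal.ofReal_ne_top]
        exact mul_le_mul_right (setLIntegral_rpow_mul_setLIntegral_Ioo_le hσ hφm) _
    _ = ENNReal.ofReal (1 - σ - γ)⁻¹ * (ENNReal.ofReal σ⁻¹ *
          ∫⁻ t in Ioo 0 1, ENNReal.ofReal (k t * w' t ^ 2)) := by
        congr 1
        rw [← lintegral_const_mul' _ _ ENNReal.ofReal_ne_top]
        refine setLIntegral_congr_fun measurableSet_Ioo fun t ht => ?_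
        have hkt : 0 < k t := hk t ⟨ht.1, ht.2.le⟩
        have ht0 : 0 < t := ht.1
        rw [← ENNReal.ofReal_mul (by positivity), ← ENNReal.ofReal_mul (by positivity),
          Real.rpow_neg ht0.le]
        congr 1
        field_simp
    _ = _ := by
        rw [← mul_assoc, ← ENNReal.ofReal_mul (inv_nonneg.2 (by linarith)), mul_inv,
          mul_comm σ⁻¹]

theorem stmt_13_general (k k' : ℝ → ℝ) (γ : ℝ)
    (hkpos : ∀ x ∈ Set.Ioc (0:ℝ) 1, 0 < k x)
    (hderiv : ∀ x ∈ Set.Ioc (0:ℝ) 1, HasDerivAt k (k' x) x)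
    (hγ1 : γ < 1)
    (hcond : ∀ x ∈ Set.Ioc (0:ℝ) 1, x * k' x ≤ γ * k x) :
    ∃ C > (0:ℝ), ∀ w w' : ℝ → ℝ,
      (∀ x ∈ Set.Ioo (0:ℝ) 1, HasDerivAt w (w' x) x) →
      ContinuousOn w (Set.Icc 0 1) →
      w 0 = 0 → w 1 = 0 →
      IntegrableOn (fun x => k x * (w' x) ^ 2) (Set.Ioo 0 1) →
      ∫ x in Set.Ioo (0:ℝ) 1, (k x / x ^ 2) * (w x) ^ 2
        ≤ C * ∫ x in Set.Ioo (0:ℝ) 1, k x * (w' x) ^ 2 := by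
  obtain ⟨σ, hσ, hσγ⟩ : ∃ σ : ℝ, 0 < σ ∧ σ + γ < 1 := ⟨(1 - γ) / 2, by linarith, by linarith⟩
  have hC : 0 < (σ * (1 - σ - γ))⁻¹ := inv_pos.2 (mul_pos hσ (by linarith))
  have hkc : ContinuousOn k (Ioo 0 1) := fun x hx =>
    (hderiv x (Ioo_subset_Ioc_self hx)).continuousAt.continuousWithinAt
  have hknonneg : ∀ x ∈ Ioo (0:ℝ) 1, 0 ≤ k x := fun x hx => (hkpos x (Ioo_subset_Ioc_self hx)).le
  have hanti := antitoneOn_mul_rpow_neg_of_mul_deriv_le (convex_Ioc 0 1) (fun _ hx => hx.1)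
    hderiv hcond
  refine ⟨_, hC, fun w w' hw hwc hw0 _ hint => ?_⟩
  have hfin := hint.lintegral_lt_top.ne
  have hlin := setLIntegral_hardy_of_antitoneOn hσ hσγ hkpos
    (hkc.aemeasurable measurableSet_Ioo) hanti hwc hw hw0 hfin
  have hLm : AEStronglyMeasurable (fun x => k x / x ^ 2 * w x ^ 2) (volume.restrict (Ioo 0 1)) :=
    ((hkc.div (continuousOn_pow 2) fun x hx => pow_ne_zero 2 hx.1.ne').mul
      ((hwc.mono Ioo_subset_Icc_self).pow 2)).aestronglyMeasurable measurableSet_Ioo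
  rw [integral_eq_lintegral_of_nonneg_ae (ae_restrict_of_forall_mem measurableSet_Ioo
      fun x hx => by have := hknonneg x hx; positivity) hLm,
    integral_eq_lintegral_of_nonneg_ae (ae_restrict_of_forall_mem measurableSet_Ioo
      fun x hx => by have := hknonneg x hx; positivity) hint.aestronglyMeasurable,
    ← ENNReal.toReal_ofReal hC.le, ← ENNReal.toReal_mul]
  exact ENNReal.toReal_mono (ENNReal.mul_ne_top ENNReal.ofReal_ne_top hfin) hlin

/-- Hardy–Poincaré type inequality for degenerate weights. -/
theorem stmt_13 (k k' : ℝ → ℝ) (γ : ℝ)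
    (hkcont : ContinuousOn k (Set.Icc 0 1))
    (hk0 : k 0 = 0)
    (hkpos : ∀ x ∈ Set.Ioc (0:ℝ) 1, 0 < k x)
    (hderiv : ∀ x ∈ Set.Ioc (0:ℝ) 1, HasDerivAt k (k' x) x)
    (hγ0 : 0 ≤ γ) (hγ1 : γ < 1)
    (hcond : ∀ x ∈ Set.Ioc (0:ℝ) 1, x * k' x ≤ γ * k x) :
    ∃ C > (0:ℝ), ∀ w w' : ℝ → ℝ,
      (∀ x ∈ Set.Ioo (0:ℝ) 1, HasDerivAt w (w' x) x) →
      ContinuousOn w (Set.Icc 0 1) →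
      w 0 = 0 → w 1 = 0 →
      IntegrableOn (fun x => k x * (w' x) ^ 2) (Set.Ioo 0 1) →
      ∫ x in Set.Ioo (0:ℝ) 1, (k x / x ^ 2) * (w x) ^ 2
        ≤ C * ∫ x in Set.Ioo (0:ℝ) 1, k x * (w' x) ^ 2 :=
  stmt_13_general k k' γ hkpos hderiv hγ1 hcond
end
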